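/- arXiv:2308.01360 — 8 statements merged into one kernel-verified Lean document; each statement's English description precedes it below -/
import Mathlib

section
/- For a second-order cone function f of one real variable, f(x) = c x + d - ‖Ax + b‖ with A, b ∈ ℝ^m, f is strictly concave if and only if A ≠ 0 and b is not in the span of A. -/
open Matrix

noncomputable def enorm' {m : ℕ} (v : Fin m → ℝ) : ℝ := Real.sqrt (∑ i, v i ^ 2)

/-!
Write `p x = x • A + b`. Equality `‖p + q‖ = ‖p‖ + ‖q‖` holds exactly for vectors on a common
ray, and Euclidean space is strictly convex, so `x ↦ ‖p x‖` is strictly convex iff no two distinct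
points of the line `p` lie on a common ray. That fails precisely when the line degenerates to a
point (`A = 0`) or passes through the origin (`b ∈ span {A}`). Subtracting the norm from an affine
function turns strict convexity into strict concavity.
-/

open Set

theorem strictConcaveOn_sub_iff_strictConvexOn {𝕜 E β : Type*} [Semiring 𝕜] [PartialOrder 𝕜]
    [AddCommMonoid E] [AddCommGroup β] [PartialOrder β] [IsOrderedAddMonoid β] [SMul 𝕜 E]
    [Module 𝕜 β] {s : Set E} {f g : E → β} (hf : ConvexOn 𝕜 s f) (hf' : ConcaveOn 𝕜 s f) :
    StrictConcaveOn 𝕜 s (f - g) ↔ StrictConvexOn 𝕜 s g :=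
  ⟨fun h => by simpa using hf.sub_strictConcaveOn h, hf'.sub_strictConvexOn⟩

section SameRay

variable {M : Type*} [AddCommGroup M] [Module ℝ M] {u v : M}

theorem not_sameRay_smul_add_iff :
    (∀ x y : ℝ, x ≠ y → ¬SameRay ℝ (x • u + v) (y • u + v)) ↔
      u ≠ 0 ∧ v ∉ Submodule.span ℝ {u} := by
  refine ⟨fun h => ⟨?_, ?_⟩, ?_⟩
  · rintro rfl
    exact h 0 1 zero_ne_one (by simpa using SameRay.refl v)
  · rintro hv
    obtain ⟨a, rfl⟩ := Submodule.mem_span_singleton.mp hv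
    refine h (-a) (-a + 1) (by simp) ?_
    rw [neg_smul, neg_add_cancel]
    exact SameRay.zero_left _
  · rintro ⟨hu, hv⟩ x y hxy hray
    have hline : ∀ z : ℝ, z • u + v ≠ 0 := fun z hz =>
      hv (Submodule.mem_span_singleton.mpr ⟨-z, by rw [neg_smul, neg_eq_iff_add_eq_zero, hz]⟩)
    obtain h | h | ⟨r₁, r₂, hr₁, -, h⟩ := hray
    · exact hline x h
    · exact hline y h
    · have key : (r₁ - r₂) • v = (r₂ * y - r₁ * x) • u := by
        linear_combination (norm := module) h
      by_cases hr : r₁ = r₂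
      · subst hr
        have : (r₁ * (y - x)) • u = 0 := by linear_combination (norm := module) -key
        rcases smul_eq_zero.mp this with h0 | h0
        · rcases mul_eq_zero.mp h0 with h0 | h0
          · exact hr₁.ne' h0
          · exact hxy (sub_eq_zero.mp h0).symm
        · exact hu h0
      · refine hv (Submodule.mem_span_singleton.mpr ⟨(r₂ * y - r₁ * x) / (r₁ - r₂), ?_⟩)
        rw [div_eq_inv_mul, mul_smul, ← key, inv_smul_smul₀ (sub_ne_zero.mpr hr)]

end SameRay

section Norm

variable {E : Type*} [NormedAddCommGroup E] [NormedSpace ℝ E] {u v : E}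

theorem StrictConvexOn.not_sameRay_smul_add
    (h : StrictConvexOn ℝ univ fun x : ℝ => ‖x • u + v‖) {x y : ℝ} (hxy : x ≠ y) :
    ¬SameRay ℝ (x • u + v) (y • u + v) := by
  intro hray
  have hmid := h.2 trivial trivial hxy (one_half_pos (α := ℝ)) one_half_pos (add_halves 1)
  have hsplit : ((1 / 2 : ℝ) • x + (1 / 2 : ℝ) • y) • u + v =
      (1 / 2 : ℝ) • (x • u + v) + (1 / 2 : ℝ) • (y • u + v) := by module
  simp only at hmid
  rw [hsplit, ((hray.pos_smul_left one_half_pos).pos_smul_right one_half_pos).norm_add,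
    norm_smul, norm_smul, Real.norm_of_nonneg one_half_pos.le] at hmid
  exact lt_irrefl _ hmid

theorem strictConvexOn_norm_smul_add_iff [StrictConvexSpace ℝ E] :
    (StrictConvexOn ℝ univ fun x : ℝ => ‖x • u + v‖) ↔
      ∀ x y : ℝ, x ≠ y → ¬SameRay ℝ (x • u + v) (y • u + v) := by
  refine ⟨fun h x y => h.not_sameRay_smul_add, fun h => ⟨convex_univ, ?_⟩⟩
  intro x _ y _ hxy a b ha hb hab
  have hray : ¬SameRay ℝ (a • (x • u + v)) (b • (y • u + v)) := fun hsame =>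
    h x y hxy (by simpa [ha.ne', hb.ne'] using
      (hsame.pos_smul_left (inv_pos.mpr ha)).pos_smul_right (inv_pos.mpr hb))
  calc ‖(a • x + b • y) • u + v‖ = ‖a • (x • u + v) + b • (y • u + v)‖ := by
        congr 1; linear_combination (norm := module) -(hab • v)
    _ < ‖a • (x • u + v)‖ + ‖b • (y • u + v)‖ := norm_add_lt_of_not_sameRay hray
    _ = a • ‖x • u + v‖ + b • ‖y • u + v‖ := by
        rw [norm_smul, norm_smul, Real.norm_of_nonneg ha.le, Real.norm_of_nonneg hb.le]; rfl

end Norm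

theorem enorm'_eq_norm_toLp {m : ℕ} (v : Fin m → ℝ) : enorm' v = ‖WithLp.toLp 2 v‖ := by
  simp [EuclideanSpace.norm_eq, enorm']

theorem socf_one_var_strict_concave_iff {m : ℕ} (c d : ℝ) (A b : Fin m → ℝ) :
    StrictConcaveOn ℝ Set.univ
      (fun x : ℝ => c * x + d - enorm' (x • A + b)) ↔
    A ≠ 0 ∧ b ∉ Submodule.span ℝ {A} := by
  let e := (WithLp.linearEquiv 2 ℝ (Fin m → ℝ)).symm
  have hnorm : (fun x : ℝ => enorm' (x • A + b)) = fun x => ‖x • e A + e b‖ := by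
    funext x
    rw [enorm'_eq_norm_toLp, ← map_smul, ← map_add]
    rfl
  have hray (x y : ℝ) : SameRay ℝ (x • e A + e b) (y • e A + e b) ↔
      SameRay ℝ (x • A + b) (y • A + b) := by
    simpa only [map_add, map_smul] using
      SameRay.sameRay_map_iff (x := x • A + b) (y := y • A + b) e
  have hconvex : ConvexOn ℝ univ (fun x : ℝ => c * x + d) :=
    ((LinearMap.mul ℝ ℝ c).convexOn convex_univ).add_const d
  have hconcave : ConcaveOn ℝ univ (fun x : ℝ => c * x + d) :=
    ((LinearMap.mul ℝ ℝ c).concaveOn convex_univ).add_const d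
  change StrictConcaveOn ℝ univ ((fun x : ℝ => c * x + d) - fun x => enorm' (x • A + b)) ↔ _
  rw [strictConcaveOn_sub_iff_strictConvexOn hconvex hconcave, hnorm,
    strictConvexOn_norm_smul_add_iff, ← not_sameRay_smul_add_iff]
  simp only [hray]
end

section
/- If A is an n×n square matrix, then the second-order cone function f(x) = c^T x + d - ‖Ax + b‖ is never strictly concave. -/
/-! Either `A` has a nonzero kernel vector `v`, and then `A x + b` is constant along `x + t v`, or
`A` is invertible, and then `A x + b` vanishes at some point `x₀`. In both cases there are points
`x ≠ y` whose images `A x + b`, `A y + b` lie on a common ray, so the norm is additive on them and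
`f` is affine on the segment `[x, y]`. -/

open Matrix

noncomputable def socfEnorm {m : ℕ} (v : Fin m → ℝ) : ℝ := Real.sqrt (∑ i, v i ^ 2)

lemma socfEnorm_eq_norm {m : ℕ} (v : Fin m → ℝ) :
    socfEnorm v = ‖(WithLp.toLp 2 v : EuclideanSpace ℝ (Fin m))‖ := by
  simp [socfEnorm, EuclideanSpace.norm_eq]

lemma SameRay.socfEnorm_smul_add_smul {m : ℕ} {v w : Fin m → ℝ} (h : SameRay ℝ v w)
    {a b : ℝ} (ha : 0 ≤ a) (hb : 0 ≤ b) :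
    socfEnorm (a • v + b • w) = a * socfEnorm v + b * socfEnorm w := by
  have hray : SameRay ℝ (WithLp.toLp 2 (a • v) : EuclideanSpace ℝ (Fin m)) (WithLp.toLp 2 (b • w)) :=
    ((h.nonneg_smul_left ha).nonneg_smul_right hb).map (WithLp.linearEquiv 2 ℝ _).symm.toLinearMap
  rw [socfEnorm_eq_norm, WithLp.toLp_add, hray.norm_add, WithLp.toLp_smul, WithLp.toLp_smul,
    norm_smul, norm_smul, Real.norm_of_nonneg ha, Real.norm_of_nonneg hb, socfEnorm_eq_norm,
    socfEnorm_eq_norm]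

lemma LinearMap.exists_ne_sameRay_apply_add {𝕜 V : Type*} [Field 𝕜] [PartialOrder 𝕜]
    [IsStrictOrderedRing 𝕜] [AddCommGroup V] [Module 𝕜 V] [FiniteDimensional 𝕜 V] [Nontrivial V]
    (f : V →ₗ[𝕜] V) (b : V) : ∃ x y, x ≠ y ∧ SameRay 𝕜 (f x + b) (f y + b) := by
  by_cases hf : Function.Injective f
  · obtain ⟨x, hx⟩ := LinearMap.injective_iff_surjective.1 hf (-b)
    obtain ⟨y, hy⟩ := exists_ne x
    exact ⟨x, y, hy.symm, by simp [hx]⟩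
  · obtain ⟨v, hv, hv0⟩ : ∃ v, f v = 0 ∧ v ≠ 0 := by
      simpa [injective_iff_map_eq_zero] using hf
    exact ⟨0, v, hv0.symm, by simpa [hv] using SameRay.rfl⟩

lemma mulVec_smul_add_smul_add {R m n : Type*} [CommRing R] [Fintype n] (A : Matrix m n R)
    (b : m → R) (x y : n → R) {s t : R} (hst : s + t = 1) :
    A *ᵥ (s • x + t • y) + b = s • (A *ᵥ x + b) + t • (A *ᵥ y + b) := by
  rw [mulVec_add, mulVec_smul, mulVec_smul]
  linear_combination (norm := module) -(hst • b)

theorem socf_square_not_strict_concave {n : ℕ} (hn : 0 < n) (c : Fin n → ℝ) (d : ℝ)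
    (A : Matrix (Fin n) (Fin n) ℝ) (b : Fin n → ℝ) :
    ¬ StrictConcaveOn ℝ Set.univ
      (fun x : Fin n → ℝ => c ⬝ᵥ x + d - socfEnorm (A.mulVec x + b)) := by
  have : Nonempty (Fin n) := ⟨⟨0, hn⟩⟩
  obtain ⟨x, y, hxy, hray⟩ := (mulVecLin A).exists_ne_sameRay_apply_add b
  intro hf
  have hmid := hf.2 trivial trivial hxy (by norm_num : (0 : ℝ) < 1 / 2) (by norm_num)
    (add_halves 1)
  rw [mulVecLin_apply, mulVecLin_apply] at hray
  dsimp only at hmid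
  rw [mulVec_smul_add_smul_add A b x y (add_halves 1),
    hray.socfEnorm_smul_add_smul (by norm_num) (by norm_num)] at hmid
  simp only [dotProduct_add, dotProduct_smul, smul_eq_mul] at hmid
  linarith
end

section
/- Every second-order cone function on ℝ^n defined with an m×n matrix A can also be defined with an (n+1)×n matrix: there exist A' ∈ ℝ^{(n+1)×n} and b' ∈ ℝ^{n+1} such that ‖Ax + b‖ = ‖A'x + b'‖ for all x. -/
/-!
Homogenize: `A x + b = B (x, 1)` with `B = [A | b]`, so `‖A x + b‖² = (x, 1)ᵀ (Bᵀ B) (x, 1)` depends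
on `B` only through its Gram matrix `Bᵀ B`, which is `(n + 1) × (n + 1)`. Its positive semidefinite
square root `S` has the same Gram matrix, and splitting `S = [A' | b']` gives the required data.
-/

open Matrix

theorem mulVec_snoc_one {R : Type*} [CommSemiring R] {m n : ℕ}
    (M : Matrix (Fin m) (Fin (n + 1)) R) (x : Fin n → R) :
    M *ᵥ Fin.snoc x 1 = M.submatrix id Fin.castSucc *ᵥ x + fun i => M i (Fin.last n) := by
  ext i
  simp [mulVec, dotProduct, Fin.sum_univ_castSucc]

theorem sum_sq_mulVec_eq_dotProduct_conjTranspose_mul_self {κ ι : Type*} [Fintype κ] [Fintype ι]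
    (M : Matrix κ ι ℝ) (v : ι → ℝ) : ∑ i, (M *ᵥ v) i ^ 2 = v ⬝ᵥ (Mᴴ * M) *ᵥ v := by
  rw [← mulVec_mulVec, dotProduct_mulVec, vecMul_conjTranspose]
  simp [dotProduct, sq]

theorem enorm'_mulVec_eq_of_conjTranspose_mul_self_eq {m k : ℕ} {ι : Type*} [Fintype ι]
    {M : Matrix (Fin m) ι ℝ} {N : Matrix (Fin k) ι ℝ} (h : Mᴴ * M = Nᴴ * N) (v : ι → ℝ) :
    enorm' (M *ᵥ v) = enorm' (N *ᵥ v) := by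
  unfold enorm'
  rw [sum_sq_mulVec_eq_dotProduct_conjTranspose_mul_self,
    sum_sq_mulVec_eq_dotProduct_conjTranspose_mul_self, h]

open scoped MatrixOrder ComplexOrder in
theorem exists_square_conjTranspose_mul_self_eq {𝕜 κ ι : Type*} [RCLike 𝕜] [Fintype κ]
    [Fintype ι] [DecidableEq ι] (B : Matrix κ ι 𝕜) : ∃ S : Matrix ι ι 𝕜, Sᴴ * S = Bᴴ * B := by
  have hGram : 0 ≤ Bᴴ * B := (posSemidef_conjTranspose_mul_self B).nonneg
  refine ⟨CFC.sqrt (Bᴴ * B), ?_⟩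
  rw [(CFC.sqrt_nonneg (Bᴴ * B)).posSemidef.1, CFC.sqrt_mul_sqrt_self _ hGram]

theorem socf_reduce_rows {m n : ℕ} (A : Matrix (Fin m) (Fin n) ℝ) (b : Fin m → ℝ) :
    ∃ (A' : Matrix (Fin (n + 1)) (Fin n) ℝ) (b' : Fin (n + 1) → ℝ),
      ∀ x : Fin n → ℝ, enorm' (A.mulVec x + b) = enorm' (A'.mulVec x + b') := by
  let B : Matrix (Fin m) (Fin (n + 1)) ℝ := of fun i => Fin.snoc (A i) (b i)
  obtain ⟨S, hS⟩ := exists_square_conjTranspose_mul_self_eq B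
  refine ⟨S.submatrix id Fin.castSucc, fun i => S i (Fin.last n), fun x => ?_⟩
  have hB : A *ᵥ x + b = B *ᵥ Fin.snoc x 1 := by
    rw [mulVec_snoc_one]
    congr <;> ext <;> simp [B]
  rw [hB, ← mulVec_snoc_one, enorm'_mulVec_eq_of_conjTranspose_mul_self_eq hS.symm]
end

section
/- Suppose c^T x + d - sqrt(δ² + (x-x*)^T M (x-x*)) = c̃^T x + d̃ - sqrt(δ̃² + (x-x̃*)^T M̃ (x-x̃*)) for all x ∈ ℝ^n, where M, M̃ are positive semidefinite and δ, δ̃ ≥ 0. Then c̃ = c and M̃ = M. -/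
open Matrix

noncomputable def enorm {m : ℕ} (v : Fin m → ℝ) : ℝ := Real.sqrt (∑ i, v i ^ 2)

/-!
Along a line `t ↦ t • v`, the function `x ↦ c ⬝ᵥ x + d - √(δ² + (x - x*) ⬝ᵥ M (x - x*))` equals
`t * (c ⬝ᵥ v) - |t| * √(v ⬝ᵥ M v)` up to a bounded error: writing `M = Bᵀ B`, the square root
`√(u ⬝ᵥ M u) = ‖B u‖` is a seminorm, and `√(δ² + r²)` stays within `|δ|` of `r ≥ 0`.
The slopes at `t → +∞` and `t → -∞` therefore determine `c ⬝ᵥ v` and `v ⬝ᵥ M v` for every `v`,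
hence `c` and, by polarization, the symmetric matrix `M`.
-/

open scoped MatrixOrder

def HasLineAsymptote {V : Type*} [AddCommGroup V] [Module ℝ V] (f : V → ℝ) (v : V) (a b : ℝ) :
    Prop :=
  ∃ C, ∀ t : ℝ, |f (t • v) - (t * a - |t| * b)| ≤ C

lemma eq_zero_of_forall_pos_mul_abs_le {x C : ℝ} (h : ∀ T > 0, T * |x| ≤ C) : x = 0 := by
  by_contra hx
  have hx' : 0 < |x| := abs_pos.mpr hx
  have := h ((|C| + 1) / |x|) (by positivity)
  rw [div_mul_cancel₀ _ hx'.ne'] at this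
  linarith [le_abs_self C]

lemma eq_zero_of_forall_abs_mul_sub_abs_mul_le {a b C : ℝ}
    (h : ∀ t : ℝ, |t * a - |t| * b| ≤ C) : a = 0 ∧ b = 0 := by
  have hsub : a - b = 0 := eq_zero_of_forall_pos_mul_abs_le fun T hT => by
    simpa [← mul_sub, abs_mul, abs_of_pos hT] using h T
  have hadd : a + b = 0 := eq_zero_of_forall_pos_mul_abs_le fun T hT => by
    have h_neg := h (-T)
    rwa [abs_neg, abs_of_pos hT, show -T * a - T * b = -(T * (a + b)) by ring, abs_neg,
      abs_mul, abs_of_pos hT] at h_neg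
  constructor <;> linarith

theorem HasLineAsymptote.unique {V : Type*} [AddCommGroup V] [Module ℝ V] {f : V → ℝ} {v : V}
    {a b a' b' : ℝ} (h : HasLineAsymptote f v a b) (h' : HasLineAsymptote f v a' b') :
    a = a' ∧ b = b' := by
  obtain ⟨C, hC⟩ := h
  obtain ⟨C', hC'⟩ := h'
  have hdiff (t : ℝ) : |t * (a - a') - |t| * (b - b')| ≤ C' + C :=
    calc |t * (a - a') - |t| * (b - b')|
        = |(f (t • v) - (t * a' - |t| * b')) - (f (t • v) - (t * a - |t| * b))| := by
          congr 1; ring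
      _ ≤ C' + C := (abs_sub _ _).trans (add_le_add (hC' t) (hC t))
  obtain ⟨ha, hb⟩ := eq_zero_of_forall_abs_mul_sub_abs_mul_le hdiff
  exact ⟨sub_eq_zero.mp ha, sub_eq_zero.mp hb⟩

lemma abs_sqrt_sq_add_sq_sub_le (a : ℝ) {b : ℝ} (hb : 0 ≤ b) :
    |√(a ^ 2 + b ^ 2) - b| ≤ |a| := by
  rw [abs_sub_le_iff]
  constructor
  · have : √(a ^ 2 + b ^ 2) ≤ |a| + b := by
      rw [Real.sqrt_le_left (by positivity)]
      nlinarith [sq_abs a, abs_nonneg a]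
    linarith
  · have : b ≤ √(a ^ 2 + b ^ 2) :=
      calc b = √(b ^ 2) := (Real.sqrt_sq hb).symm
        _ ≤ √(a ^ 2 + b ^ 2) := Real.sqrt_le_sqrt (le_add_of_nonneg_left (sq_nonneg a))
    linarith [abs_nonneg a]

theorem hasLineAsymptote_linear_sub_sqrt {V E : Type*} [AddCommGroup V] [Module ℝ V]
    [SeminormedAddCommGroup E] [NormedSpace ℝ E] (ℓ : V →ₗ[ℝ] ℝ) (L : V →ₗ[ℝ] E) (d δ : ℝ)
    (w v : V) :
    HasLineAsymptote (fun x => ℓ x + d - √(δ ^ 2 + ‖L (x - w)‖ ^ 2)) v (ℓ v) ‖L v‖ := by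
  refine ⟨|d| + |δ| + ‖L w‖, fun t => ?_⟩
  have hnorm : |‖L (t • v - w)‖ - |t| * ‖L v‖| ≤ ‖L w‖ := by
    simpa [norm_smul] using abs_norm_sub_norm_le (t • L v - L w) (t • L v)
  have hsqrt := abs_sqrt_sq_add_sq_sub_le δ (norm_nonneg (L (t • v - w)))
  simp only [map_smul, smul_eq_mul]
  rw [abs_le] at hnorm hsqrt ⊢
  constructor <;> linarith [le_abs_self d, neg_abs_le d]

theorem Matrix.PosSemidef.exists_linearMap_dotProduct_mulVec_eq_norm_sq {ι : Type*} [Fintype ι]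
    {M : Matrix ι ι ℝ} (hM : M.PosSemidef) :
    ∃ L : (ι → ℝ) →ₗ[ℝ] EuclideanSpace ℝ ι, ∀ u, u ⬝ᵥ M *ᵥ u = ‖L u‖ ^ 2 := by
  classical
  obtain ⟨B, rfl⟩ := CStarAlgebra.nonneg_iff_eq_star_mul_self.mp hM.nonneg
  refine ⟨(WithLp.linearEquiv 2 ℝ (ι → ℝ)).symm.toLinearMap ∘ₗ B.mulVecLin, fun u => ?_⟩
  rw [EuclideanSpace.real_norm_sq_eq, ← mulVec_mulVec, dotProduct_mulVec, star_eq_conjTranspose,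
    conjTranspose_eq_transpose_of_trivial, vecMul_transpose]
  simp [dotProduct, sq]

theorem hasLineAsymptote_dotProduct_sub_sqrt {ι : Type*} [Fintype ι]
    {M : Matrix ι ι ℝ} (hM : M.PosSemidef) (c w : ι → ℝ) (d δ : ℝ) (v : ι → ℝ) :
    HasLineAsymptote (fun x => c ⬝ᵥ x + d - √(δ ^ 2 + (x - w) ⬝ᵥ M *ᵥ (x - w))) v
      (c ⬝ᵥ v) √(v ⬝ᵥ M *ᵥ v) := by
  obtain ⟨L, hL⟩ := hM.exists_linearMap_dotProduct_mulVec_eq_norm_sq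
  simp only [hL, Real.sqrt_sq (norm_nonneg _)]
  exact hasLineAsymptote_linear_sub_sqrt (dotProductBilin ℝ ℝ c) L d δ w v

theorem Matrix.IsHermitian.eq_of_forall_dotProduct_mulVec_self_eq {ι : Type*} [Fintype ι]
    {A B : Matrix ι ι ℝ} (hA : A.IsHermitian) (hB : B.IsHermitian)
    (h : ∀ v, v ⬝ᵥ A *ᵥ v = v ⬝ᵥ B *ᵥ v) : A = B := by
  classical
  ext i j
  have hii := h (Pi.single i 1)
  have hjj := h (Pi.single j 1)
  have hij := h (Pi.single i 1 + Pi.single j 1)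
  have hA' := hA.apply i j
  have hB' := hB.apply i j
  simp only [mulVec_single, MulOpposite.op_one, one_smul, single_dotProduct, col_apply, one_mul,
    mulVec_add, dotProduct_add, add_dotProduct] at hii hjj hij
  simp only [star_trivial] at hA' hB'
  linarith

theorem socf_params_cM_unique_general {n : ℕ} (c ct xs xst : Fin n → ℝ) (d dt δ δt : ℝ)
    (M Mt : Matrix (Fin n) (Fin n) ℝ)
    (hM : M.PosSemidef) (hMt : Mt.PosSemidef)
    (heq : ∀ x : Fin n → ℝ,
      c ⬝ᵥ x + d - Real.sqrt (δ ^ 2 + (x - xs) ⬝ᵥ M.mulVec (x - xs)) =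
      ct ⬝ᵥ x + dt - Real.sqrt (δt ^ 2 + (x - xst) ⬝ᵥ Mt.mulVec (x - xst))) :
    ct = c ∧ Mt = M := by
  have hslopes (v : Fin n → ℝ) :
      ct ⬝ᵥ v = c ⬝ᵥ v ∧ √(v ⬝ᵥ Mt *ᵥ v) = √(v ⬝ᵥ M *ᵥ v) := by
    have h := hasLineAsymptote_dotProduct_sub_sqrt hM c xs d δ v
    rw [funext heq] at h
    exact (hasLineAsymptote_dotProduct_sub_sqrt hMt ct xst dt δt v).unique h
  refine ⟨dotProduct_eq_iff.mp fun v => (hslopes v).1,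
    hMt.1.eq_of_forall_dotProduct_mulVec_self_eq hM.1 fun v => ?_⟩
  exact (Real.sqrt_inj (hMt.dotProduct_mulVec_nonneg v) (hM.dotProduct_mulVec_nonneg v)).mp
    (hslopes v).2

theorem socf_params_cM_unique {n : ℕ} (c ct xs xst : Fin n → ℝ) (d dt δ δt : ℝ)
    (M Mt : Matrix (Fin n) (Fin n) ℝ)
    (hM : M.PosSemidef) (hMt : Mt.PosSemidef) (hδ : 0 ≤ δ) (hδt : 0 ≤ δt)
    (heq : ∀ x : Fin n → ℝ,
      c ⬝ᵥ x + d - Real.sqrt (δ ^ 2 + (x - xs) ⬝ᵥ M.mulVec (x - xs)) =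
      ct ⬝ᵥ x + dt - Real.sqrt (δt ^ 2 + (x - xst) ⬝ᵥ Mt.mulVec (x - xst))) :
    ct = c ∧ Mt = M :=
  socf_params_cM_unique_general c ct xs xst d dt δ δt M Mt hM hMt heq
end

section
/- Suppose c^T x + d - sqrt(δ² + (x-x*)^T M (x-x*)) = c̃^T x + d̃ - sqrt(δ̃² + (x-x̃*)^T M (x-x̃*)) for all x ∈ ℝ^n, where M ≠ 0 is positive semidefinite and δ, δ̃ ≥ 0. Then c̃ = c, d̃ = d, δ̃ = δ, and M x̃* = M x*. -/
open Matrix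

/-!
The linear part is read off at infinity: `s * f (s⁻¹ • v) → cᵀv - √(vᵀMv)` as `s → 0⁺`, so the
two functions share `c`. What remains says that `√(δ² + Q(x - x*)) - √(δ̃² + Q(x - x̃*))` is a
constant `k`, where `Q` is the quadratic form of `M`. The first root is even about `x*`, hence so
is the second, which forces `M(x* - x̃*) = 0`; then both roots depend on `x` only through
`q = Q(x - x*)`. Comparing `q = 0` with some `q > 0` (which exists since `M ≠ 0`) gives `k = 0`,
and then `δ = δ̃`.
-/

open Filter Topology

lemma Real.eq_zero_of_sqrt_eq_sqrt_add_of_sqrt_add_eq {a b k q : ℝ} (ha : 0 ≤ a) (hb : 0 ≤ b)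
    (hq : 0 < q) (h₀ : √a = √b + k) (h₁ : √(a + q) = √(b + q) + k) : k = 0 := by
  have hlt : √b < √(b + q) := Real.sqrt_lt_sqrt hb (by linarith)
  have e₀ := congrArg (· ^ 2) h₀
  have e₁ := congrArg (· ^ 2) h₁
  simp only [Real.sq_sqrt ha, Real.sq_sqrt (by linarith : 0 ≤ a + q)] at e₀ e₁
  have : k * (√(b + q) - √b) = 0 := by
    nlinarith [Real.sq_sqrt hb, Real.sq_sqrt (by linarith : 0 ≤ b + q)]
  exact (mul_eq_zero.mp this).resolve_right (by linarith)

namespace Matrix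

variable {ι : Type*}

lemma PosSemidef.isSymm {M : Matrix ι ι ℝ} (hM : M.PosSemidef) : M.IsSymm := by
  simpa [IsSymm, conjTranspose_eq_transpose_of_trivial] using hM.isHermitian.eq

variable [Fintype ι]

lemma IsSymm.dotProduct_mulVec_comm {R : Type*} [CommSemiring R] {M : Matrix ι ι R}
    (hM : M.IsSymm) (u w : ι → R) : u ⬝ᵥ M *ᵥ w = w ⬝ᵥ M *ᵥ u := by
  rw [dotProduct_mulVec, ← mulVec_transpose, hM, dotProduct_comm]

lemma IsSymm.add_dotProduct_mulVec_add_sub {R : Type*} [CommRing R] {M : Matrix ι ι R}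
    (hM : M.IsSymm) (p u : ι → R) :
    (p + u) ⬝ᵥ M *ᵥ (p + u) - (p - u) ⬝ᵥ M *ᵥ (p - u) = 4 * (u ⬝ᵥ M *ᵥ p) := by
  simp only [mulVec_add, mulVec_sub, add_dotProduct, sub_dotProduct, dotProduct_add,
    dotProduct_sub, hM.dotProduct_mulVec_comm p u]
  ring

lemma IsSymm.sub_dotProduct_mulVec_sub_of_mulVec_eq {R : Type*} [CommRing R] {M : Matrix ι ι R}
    (hM : M.IsSymm) {x₀ x₁ : ι → R} (h : M *ᵥ x₁ = M *ᵥ x₀) (x : ι → R) :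
    (x - x₁) ⬝ᵥ M *ᵥ (x - x₁) = (x - x₀) ⬝ᵥ M *ᵥ (x - x₀) := by
  have h₁ : x₁ ⬝ᵥ M *ᵥ x₀ = x₀ ⬝ᵥ M *ᵥ x₀ := by rw [hM.dotProduct_mulVec_comm, h]
  simp only [mulVec_sub, sub_dotProduct, dotProduct_sub, h, h₁, hM.dotProduct_mulVec_comm x₁ x,
    hM.dotProduct_mulVec_comm x₀ x]

lemma smul_dotProduct_mulVec_smul {R : Type*} [CommSemiring R] (M : Matrix ι ι R) (s : R)
    (v : ι → R) :
    (s • v) ⬝ᵥ M *ᵥ (s • v) = s ^ 2 * (v ⬝ᵥ M *ᵥ v) := by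
  rw [mulVec_smul, smul_dotProduct, dotProduct_smul, smul_eq_mul, smul_eq_mul]
  ring

lemma PosSemidef.dotProduct_mulVec_self_nonneg {M : Matrix ι ι ℝ} (hM : M.PosSemidef)
    (v : ι → ℝ) : 0 ≤ v ⬝ᵥ M *ᵥ v := by
  simpa using hM.dotProduct_mulVec_nonneg v

lemma PosSemidef.exists_dotProduct_mulVec_pos {M : Matrix ι ι ℝ} (hM : M.PosSemidef)
    (hM0 : M ≠ 0) : ∃ v, 0 < v ⬝ᵥ M *ᵥ v := by
  by_contra! h
  refine hM0 (ext_iff_mulVec.mpr fun v ↦ ?_)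
  rw [zero_mulVec, ← hM.dotProduct_mulVec_zero_iff, star_trivial]
  exact (h v).antisymm (hM.dotProduct_mulVec_self_nonneg v)

lemma PosSemidef.mulVec_eq_of_sqrt_eq_sqrt_add {M : Matrix ι ι ℝ} (hM : M.PosSemidef)
    {δ δ' k : ℝ} {x₀ x₁ : ι → ℝ}
    (h : ∀ x, √(δ ^ 2 + (x - x₀) ⬝ᵥ M *ᵥ (x - x₀)) = √(δ' ^ 2 + (x - x₁) ⬝ᵥ M *ᵥ (x - x₁)) + k) :
    M *ᵥ x₁ = M *ᵥ x₀ := by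
  suffices M *ᵥ (x₀ - x₁) = 0 by rwa [mulVec_sub, sub_eq_zero, eq_comm] at this
  refine dotProduct_eq_zero _ fun u ↦ ?_
  have hsqrt : √(δ' ^ 2 + (x₀ - x₁ + u) ⬝ᵥ M *ᵥ (x₀ - x₁ + u)) =
      √(δ' ^ 2 + (x₀ - x₁ - u) ⬝ᵥ M *ᵥ (x₀ - x₁ - u)) := by
    have hp := h (x₀ + u)
    have hm := h (x₀ - u)
    rw [add_sub_cancel_left, add_sub_right_comm] at hp
    rw [sub_sub_cancel_left, sub_right_comm, mulVec_neg, neg_dotProduct, dotProduct_neg,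
      neg_neg] at hm
    linarith
  have hq := (Real.sqrt_inj (by positivity [hM.dotProduct_mulVec_self_nonneg (x₀ - x₁ + u)])
    (by positivity [hM.dotProduct_mulVec_self_nonneg (x₀ - x₁ - u)])).mp hsqrt
  have := hM.isSymm.add_dotProduct_mulVec_add_sub (x₀ - x₁) u
  rw [dotProduct_comm]
  linarith

end Matrix

section Socf

variable {ι : Type*} [Fintype ι]

noncomputable def socf (M : Matrix ι ι ℝ) (c : ι → ℝ) (d δ : ℝ) (x₀ x : ι → ℝ) : ℝ :=
  c ⬝ᵥ x + d - √(δ ^ 2 + (x - x₀) ⬝ᵥ M *ᵥ (x - x₀))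

variable (M : Matrix ι ι ℝ) (c : ι → ℝ) (d δ : ℝ) (x₀ : ι → ℝ)

lemma mul_socf_inv_smul {s : ℝ} (hs : 0 < s) (v : ι → ℝ) :
    s * socf M c d δ x₀ (s⁻¹ • v) =
      c ⬝ᵥ v + s * d - √((s * δ) ^ 2 + (v - s • x₀) ⬝ᵥ M *ᵥ (v - s • x₀)) := by
  have hv : v - s • x₀ = s • (s⁻¹ • v - x₀) := by
    rw [smul_sub, smul_inv_smul₀ hs.ne']
  rw [socf, hv, smul_dotProduct_mulVec_smul, mul_pow, ← mul_add, Real.sqrt_mul (sq_nonneg s),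
    Real.sqrt_sq hs.le, dotProduct_smul, smul_eq_mul]
  field_simp

lemma tendsto_mul_socf_inv_smul (v : ι → ℝ) :
    Tendsto (fun s ↦ s * socf M c d δ x₀ (s⁻¹ • v)) (𝓝[>] 0)
      (𝓝 (c ⬝ᵥ v - √(v ⬝ᵥ M *ᵥ v))) := by
  have hcont : Continuous fun s : ℝ ↦
      c ⬝ᵥ v + s * d - √((s * δ) ^ 2 + (v - s • x₀) ⬝ᵥ M *ᵥ (v - s • x₀)) := by
    fun_prop
  have hlim := (hcont.tendsto 0).mono_left (nhdsWithin_le_nhds (s := Set.Ioi 0))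
  simp only [zero_mul, add_zero, zero_smul, sub_zero, ne_eq, OfNat.ofNat_ne_zero,
    not_false_eq_true, zero_pow, zero_add] at hlim
  exact hlim.congr' (eventually_nhdsWithin_of_forall fun s hs ↦
    (mul_socf_inv_smul M c d δ x₀ hs v).symm)

variable {M c d δ x₀}

lemma linear_eq_of_socf_eq {c' : ι → ℝ} {d' δ' : ℝ} {x₀' : ι → ℝ}
    (h : socf M c d δ x₀ = socf M c' d' δ' x₀') : c = c' := by
  refine dotProduct_eq _ _ fun v ↦ ?_
  have hlim := tendsto_mul_socf_inv_smul M c d δ x₀ v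
  rw [h] at hlim
  simpa using tendsto_nhds_unique hlim (tendsto_mul_socf_inv_smul M c' d' δ' x₀' v)

end Socf

theorem socf_params_unique_M_ne_zero {n : ℕ} (c ct xs xst : Fin n → ℝ)
    (d dt δ δt : ℝ) (M : Matrix (Fin n) (Fin n) ℝ)
    (hM : M.PosSemidef) (hM0 : M ≠ 0) (hδ : 0 ≤ δ) (hδt : 0 ≤ δt)
    (heq : ∀ x : Fin n → ℝ,
      c ⬝ᵥ x + d - Real.sqrt (δ ^ 2 + (x - xs) ⬝ᵥ M.mulVec (x - xs)) =
      ct ⬝ᵥ x + dt - Real.sqrt (δt ^ 2 + (x - xst) ⬝ᵥ M.mulVec (x - xst))) :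
    ct = c ∧ dt = d ∧ δt = δ ∧ M.mulVec xst = M.mulVec xs := by
  obtain rfl : c = ct := linear_eq_of_socf_eq (M := M) (funext heq)
  have hk (x : Fin n → ℝ) : √(δ ^ 2 + (x - xs) ⬝ᵥ M *ᵥ (x - xs)) =
      √(δt ^ 2 + (x - xst) ⬝ᵥ M *ᵥ (x - xst)) + (d - dt) := by
    linarith [heq x]
  have hMx := hM.mulVec_eq_of_sqrt_eq_sqrt_add hk
  simp only [hM.isSymm.sub_dotProduct_mulVec_sub_of_mulVec_eq hMx] at hk
  obtain ⟨v, hv⟩ := hM.exists_dotProduct_mulVec_pos hM0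
  have h₀ := hk xs
  have h₁ := hk (xs + v)
  simp only [sub_self, mulVec_zero, dotProduct_zero, add_zero, add_sub_cancel_left] at h₀ h₁
  have hd := Real.eq_zero_of_sqrt_eq_sqrt_add_of_sqrt_add_eq (sq_nonneg δ) (sq_nonneg δt) hv h₀ h₁
  rw [hd, add_zero, Real.sqrt_sq hδ, Real.sqrt_sq hδt] at h₀
  exact ⟨rfl, by linarith, h₀.symm, hMx⟩
end

section
/- Let M be positive definite and f(x) = c^T x + d - sqrt(δ² + (x-x*)^T M (x-x*)) with δ ≥ 0. Then f is bounded above if and only if c^T M^{-1} c ≤ 1. -/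
/-!
Write `s = cᵀ M⁻¹ c`. Cauchy–Schwarz for the inner product defined by `M` gives
`(cᵀ y)² ≤ s · yᵀ M y`, so for `s ≤ 1` the linear part never beats the square root and
`f ≤ cᵀ x* + d`. For `s > 1`, along the ray `x* + t M⁻¹ c` the function equals
`cᵀ x* + d + t s - √(δ² + t² s) ≥ cᵀ x* + d + t (s - √s) - |δ|`, which tends to `+∞`.
-/

open Matrix

open Filter

theorem Matrix.PosSemidef.sq_dotProduct_mulVec_le {ι : Type*} [Fintype ι]
    {M : Matrix ι ι ℝ} (hM : M.PosSemidef) (x y : ι → ℝ) :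
    (x ⬝ᵥ M *ᵥ y) ^ 2 ≤ (x ⬝ᵥ M *ᵥ x) * (y ⬝ᵥ M *ᵥ y) := by
  let := M.toSeminormedAddCommGroup hM
  let := M.toInnerProductSpace hM
  have h := real_inner_mul_inner_self_le x y
  change (M *ᵥ y ⬝ᵥ x) * (M *ᵥ y ⬝ᵥ x) ≤ (M *ᵥ x ⬝ᵥ x) * (M *ᵥ y ⬝ᵥ y) at h
  simpa only [sq, dotProduct_comm (M *ᵥ _)] using h

section PosDef

variable {ι : Type*} [Fintype ι] [DecidableEq ι] {M : Matrix ι ι ℝ}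

theorem Matrix.PosDef.inv_mulVec_dotProduct_mulVec (hM : M.PosDef) (c y : ι → ℝ) :
    M⁻¹ *ᵥ c ⬝ᵥ M *ᵥ y = c ⬝ᵥ y := by
  have hMt : Mᵀ = M := by simpa using hM.isHermitian.eq
  rw [dotProduct_mulVec, ← mulVec_transpose, hMt, mulVec_mulVec,
    mul_nonsing_inv M ((isUnit_iff_isUnit_det M).mp hM.isUnit), one_mulVec]

theorem Matrix.PosDef.sq_dotProduct_le (hM : M.PosDef) (c y : ι → ℝ) :
    (c ⬝ᵥ y) ^ 2 ≤ (c ⬝ᵥ M⁻¹ *ᵥ c) * (y ⬝ᵥ M *ᵥ y) := by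
  have h := hM.posSemidef.sq_dotProduct_mulVec_le (M⁻¹ *ᵥ c) y
  rwa [hM.inv_mulVec_dotProduct_mulVec, hM.inv_mulVec_dotProduct_mulVec] at h

theorem Matrix.PosDef.dotProduct_le_sqrt_add (hM : M.PosDef) {c : ι → ℝ}
    (hc : c ⬝ᵥ M⁻¹ *ᵥ c ≤ 1) {a : ℝ} (ha : 0 ≤ a) (y : ι → ℝ) :
    c ⬝ᵥ y ≤ √(a + y ⬝ᵥ M *ᵥ y) := by
  have hq : 0 ≤ y ⬝ᵥ M *ᵥ y := by simpa using hM.posSemidef.dotProduct_mulVec_nonneg y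
  calc c ⬝ᵥ y ≤ |c ⬝ᵥ y| := le_abs_self _
    _ = √((c ⬝ᵥ y) ^ 2) := (Real.sqrt_sq_eq_abs _).symm
    _ ≤ √(a + y ⬝ᵥ M *ᵥ y) := by
      gcongr
      nlinarith [hM.sq_dotProduct_le c y]

end PosDef

theorem Real.sqrt_sq_add_sq_mul_le (δ : ℝ) {s t : ℝ} (hs : 0 ≤ s) (ht : 0 ≤ t) :
    √(δ ^ 2 + t ^ 2 * s) ≤ |δ| + t * √s := by
  rw [Real.sqrt_le_iff]
  refine ⟨by positivity, ?_⟩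
  nlinarith [sq_abs δ, Real.sq_sqrt hs, abs_nonneg δ, Real.sqrt_nonneg s,
    mul_nonneg ht (Real.sqrt_nonneg s)]

theorem tendsto_mul_sub_sqrt_sq_add_atTop (δ : ℝ) {s : ℝ} (hs : 1 < s) :
    Tendsto (fun t : ℝ => t * s - √(δ ^ 2 + t ^ 2 * s)) atTop atTop := by
  have hgap : 0 < s - √s := by
    nlinarith [Real.sq_sqrt (zero_le_one.trans hs.le), Real.sqrt_nonneg s]
  have hlin : Tendsto (fun t : ℝ => t * (s - √s) - |δ|) atTop atTop :=
    tendsto_atTop_add_const_right _ _ (tendsto_id.atTop_mul_const hgap)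
  refine tendsto_atTop_mono' _ ?_ hlin
  filter_upwards [eventually_ge_atTop 0] with t ht
  linarith [Real.sqrt_sq_add_sq_mul_le δ (zero_le_one.trans hs.le) ht]

theorem socf_bounded_above_iff_posdef_general {n : ℕ} (c xs : Fin n → ℝ) (d δ : ℝ)
    (M : Matrix (Fin n) (Fin n) ℝ) (hM : M.PosDef)
    (f : (Fin n → ℝ) → ℝ)
    (hf : ∀ x, f x = c ⬝ᵥ x + d - Real.sqrt (δ ^ 2 + (x - xs) ⬝ᵥ M.mulVec (x - xs))) :
    (∃ K : ℝ, ∀ x, f x ≤ K) ↔ c ⬝ᵥ M⁻¹.mulVec c ≤ 1 := by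
  have hsplit : ∀ x, c ⬝ᵥ x = c ⬝ᵥ xs + c ⬝ᵥ (x - xs) := fun x => by
    rw [← dotProduct_add, add_sub_cancel]
  constructor
  · rintro ⟨K, hK⟩
    by_contra! hs
    have hray : ∀ t : ℝ, f (xs + t • M⁻¹ *ᵥ c) =
        c ⬝ᵥ xs + d + (t * (c ⬝ᵥ M⁻¹ *ᵥ c) - √(δ ^ 2 + t ^ 2 * (c ⬝ᵥ M⁻¹ *ᵥ c))) := fun t => by
      rw [hf, hsplit, add_sub_cancel_left, smul_dotProduct, hM.inv_mulVec_dotProduct_mulVec]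
      simp only [dotProduct_smul, smul_eq_mul]
      rw [← mul_assoc, ← sq]
      ring
    obtain ⟨t, ht⟩ :=
      ((tendsto_mul_sub_sqrt_sq_add_atTop δ hs).eventually_gt_atTop (K - (c ⬝ᵥ xs + d))).exists
    linarith [hK (xs + t • M⁻¹ *ᵥ c), hray t]
  · intro hs
    refine ⟨c ⬝ᵥ xs + d, fun x => ?_⟩
    rw [hf, hsplit]
    linarith [hM.dotProduct_le_sqrt_add hs (sq_nonneg δ) (x - xs)]

theorem socf_bounded_above_iff_posdef {n : ℕ} (c xs : Fin n → ℝ) (d δ : ℝ)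
    (M : Matrix (Fin n) (Fin n) ℝ) (hM : M.PosDef) (hδ : 0 ≤ δ)
    (f : (Fin n → ℝ) → ℝ)
    (hf : ∀ x, f x = c ⬝ᵥ x + d - Real.sqrt (δ ^ 2 + (x - xs) ⬝ᵥ M.mulVec (x - xs))) :
    (∃ K : ℝ, ∀ x, f x ≤ K) ↔ c ⬝ᵥ M⁻¹.mulVec c ≤ 1 :=
  socf_bounded_above_iff_posdef_general c xs d δ M hM f hf
end

section
/- Let M be positive definite, δ = 0, and c^T M^{-1} c < 1. Then f(x) = c^T x + d - sqrt((x-x*)^T M (x-x*)) attains its global maximum value c^T x* + d uniquely at x = x*. -/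
open Matrix

/-! With `u = M⁻¹ c` one has `c ⬝ᵥ y = uᵀ M y`, so Cauchy–Schwarz for the inner product defined by `M`
gives `(c ⬝ᵥ y)² ≤ (cᵀ M⁻¹ c) (yᵀ M y) < yᵀ M y` for `y ≠ 0`: the linear gain `c ⬝ᵥ (x - xs)` is
strictly smaller than the penalty `√((x - xs)ᵀ M (x - xs))`. -/

section

variable {ι : Type*} [Fintype ι]

theorem Matrix.PosSemidef.dotProduct_mulVec_sq_le {M : Matrix ι ι ℝ} (hM : M.PosSemidef)
    (x y : ι → ℝ) : (x ⬝ᵥ M *ᵥ y) ^ 2 ≤ (x ⬝ᵥ M *ᵥ x) * (y ⬝ᵥ M *ᵥ y) := by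
  let _ := M.toSeminormedAddCommGroup hM
  let _ := M.toInnerProductSpace hM
  have hinner : ∀ a b : ι → ℝ, inner ℝ a b = a ⬝ᵥ M *ᵥ b := fun a b => by
    change (M *ᵥ b) ⬝ᵥ star a = _
    rw [star_trivial, dotProduct_comm]
  simpa only [hinner, sq] using real_inner_mul_inner_self_le x y

variable [DecidableEq ι]

theorem Matrix.PosDef.dotProduct_sq_le_inv_mul {M : Matrix ι ι ℝ} (hM : M.PosDef)
    (c y : ι → ℝ) : (c ⬝ᵥ y) ^ 2 ≤ (c ⬝ᵥ M⁻¹ *ᵥ c) * (y ⬝ᵥ M *ᵥ y) := by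
  have : Invertible M := hM.isUnit.invertible
  have hMu : M *ᵥ (M⁻¹ *ᵥ c) = c := by simp [mulVec_mulVec]
  have hsym : Mᵀ = M := hM.isHermitian.eq
  have hcy : c ⬝ᵥ y = M⁻¹ *ᵥ c ⬝ᵥ M *ᵥ y := by
    rw [dotProduct_mulVec, ← mulVec_transpose, hsym, hMu]
  have hcc : c ⬝ᵥ M⁻¹ *ᵥ c = M⁻¹ *ᵥ c ⬝ᵥ M *ᵥ (M⁻¹ *ᵥ c) := by
    rw [hMu, dotProduct_comm]
  rw [hcy, hcc]
  exact hM.posSemidef.dotProduct_mulVec_sq_le _ _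

theorem Matrix.PosDef.dotProduct_lt_sqrt_dotProduct_mulVec {M : Matrix ι ι ℝ} (hM : M.PosDef)
    {c : ι → ℝ} (hc : c ⬝ᵥ M⁻¹ *ᵥ c < 1) {y : ι → ℝ} (hy : y ≠ 0) :
    c ⬝ᵥ y < Real.sqrt (y ⬝ᵥ M *ᵥ y) := by
  have hpos : 0 < y ⬝ᵥ M *ᵥ y := by simpa using hM.dotProduct_mulVec_pos hy
  have hsq : (c ⬝ᵥ y) ^ 2 < y ⬝ᵥ M *ᵥ y :=
    calc (c ⬝ᵥ y) ^ 2 ≤ (c ⬝ᵥ M⁻¹ *ᵥ c) * (y ⬝ᵥ M *ᵥ y) := hM.dotProduct_sq_le_inv_mul c y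
      _ < y ⬝ᵥ M *ᵥ y := mul_lt_of_lt_one_left hpos hc
  exact (le_abs_self _).trans_lt (Real.lt_sqrt_of_sq_lt (by rwa [sq_abs]))

end

theorem socf_max_case1 {n : ℕ} (c xs : Fin n → ℝ) (d : ℝ)
    (M : Matrix (Fin n) (Fin n) ℝ) (hM : M.PosDef)
    (hc : c ⬝ᵥ M⁻¹.mulVec c < 1)
    (f : (Fin n → ℝ) → ℝ)
    (hf : ∀ x, f x = c ⬝ᵥ x + d - Real.sqrt ((x - xs) ⬝ᵥ M.mulVec (x - xs))) :
    f xs = c ⬝ᵥ xs + d ∧ ∀ x, x ≠ xs → f x < f xs := by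
  have hmax : f xs = c ⬝ᵥ xs + d := by simp [hf]
  refine ⟨hmax, fun x hx => ?_⟩
  have hlt := hM.dotProduct_lt_sqrt_dotProduct_mulVec hc (sub_ne_zero.mpr hx)
  rw [dotProduct_sub] at hlt
  rw [hmax, hf]
  linarith
end

section
/- Let f(x) = c^T x + d - sqrt(δ² + (x-x*)^T M (x-x*)) with M positive semidefinite and δ ≥ 0, and let R = {x ∈ ℝ^n : f(x) ≥ 0} be nonempty. Then R is closed and convex, and R is bounded if and only if M is positive definite and c^T M^{-1} c < 1. -/
open Matrix

/-!
Factor `M = Bᵀ B`. Then `√(δ² + (x - x*)ᵀ M (x - x*))` is the Euclidean norm of the vector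
`(δ, B (x - x*))`, which depends affinely on `x`; hence `f` is concave and continuous, and `R` is
closed and convex. The triangle inequality for the same norm shows that `R` is stable under
translation by every `w` with `√(wᵀ M w) ≤ cᵀ w`. If `M` is singular, a kernel vector of the right
sign is such a `w`; if `M` is definite and `cᵀ M⁻¹ c ≥ 1`, so is `M⁻¹ c`; either way `R` contains a
ray. Conversely, if `M` is definite, Cauchy–Schwarz in the coordinates `u = B (x - x*)` turns
`f x ≥ 0` into `(1 - √(cᵀ M⁻¹ c)) ‖u‖ ≤ cᵀ x* + d`.
-/

open Set Bornology Metric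

section SqrtSqAddNormSq

variable {F : Type*} [SeminormedAddCommGroup F]

lemma WithLp.norm_toLp_prod_L2 (δ : ℝ) (u : F) :
    ‖WithLp.toLp 2 (δ, u)‖ = √(δ ^ 2 + ‖u‖ ^ 2) := by
  simp [WithLp.prod_norm_eq_of_L2]

lemma sqrt_sq_add_norm_add_sq_le (δ : ℝ) (u v : F) :
    √(δ ^ 2 + ‖u + v‖ ^ 2) ≤ √(δ ^ 2 + ‖u‖ ^ 2) + ‖v‖ := by
  have hsplit :
      WithLp.toLp 2 (δ, u + v) = WithLp.toLp 2 (δ, u) + WithLp.toLp 2 ((0 : ℝ), v) := by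
    rw [← WithLp.toLp_add]
    simp
  have hv : ‖WithLp.toLp 2 ((0 : ℝ), v)‖ = ‖v‖ := by simp
  rw [← WithLp.norm_toLp_prod_L2, ← WithLp.norm_toLp_prod_L2, hsplit, ← hv]
  exact norm_add_le _ _

variable [NormedSpace ℝ F]

lemma convexOn_sqrt_sq_add_norm_sq (δ : ℝ) :
    ConvexOn ℝ univ fun u : F => √(δ ^ 2 + ‖u‖ ^ 2) := by
  refine ⟨convex_univ, fun u _ v _ a b ha hb hab => ?_⟩
  have hcomb : WithLp.toLp 2 (δ, a • u + b • v) =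
      a • WithLp.toLp 2 (δ, u) + b • WithLp.toLp 2 (δ, v) := by
    rw [← WithLp.toLp_smul, ← WithLp.toLp_smul, ← WithLp.toLp_add]
    simp [← add_mul, hab]
  simpa only [← WithLp.norm_toLp_prod_L2, hcomb] using
    (convexOn_norm convex_univ).2 trivial trivial ha hb hab

end SqrtSqAddNormSq

lemma norm_le_div_of_sqrt_sq_add_norm_sq_le {F : Type*} [SeminormedAddCommGroup F]
    [InnerProductSpace ℝ F] {δ e : ℝ} {a u : F} (ha : ‖a‖ < 1)
    (h : √(δ ^ 2 + ‖u‖ ^ 2) ≤ inner ℝ a u + e) : ‖u‖ ≤ e / (1 - ‖a‖) := by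
  have hu : ‖u‖ ≤ √(δ ^ 2 + ‖u‖ ^ 2) :=
    Real.le_sqrt_of_sq_le (le_add_of_nonneg_left (sq_nonneg δ))
  rw [le_div_iff₀ (sub_pos.2 ha)]
  nlinarith [real_inner_le_norm a u]

lemma not_isBounded_of_add_smul_mem {E : Type*} [SeminormedAddCommGroup E] [NormedSpace ℝ E]
    {s : Set E} {x w : E} (hw : ‖w‖ ≠ 0) (h : ∀ t : ℝ, 0 ≤ t → x + t • w ∈ s) :
    ¬ IsBounded s := by
  intro hs
  obtain ⟨r, hr⟩ := hs.subset_closedBall x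
  have hfar := hr (h ((|r| + 1) / ‖w‖) (by positivity))
  rw [mem_closedBall, dist_eq_norm, add_sub_cancel_left, norm_smul,
    Real.norm_of_nonneg (by positivity), div_mul_cancel₀ _ hw] at hfar
  linarith [le_abs_self r]

open scoped MatrixOrder in
lemma Matrix.PosSemidef.exists_eq_conjTranspose_mul_self {ι : Type*} [Fintype ι]
    {M : Matrix ι ι ℝ} (hM : M.PosSemidef) : ∃ B : Matrix ι ι ℝ, M = Bᴴ * B := by
  classical
  exact CStarAlgebra.nonneg_iff_eq_star_mul_self.mp hM.nonneg

variable {ι κ : Type*} [Fintype ι] [Fintype κ]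

lemma dotProduct_conjTranspose_mul_self_mulVec (B : Matrix κ ι ℝ) (y : ι → ℝ) :
    y ⬝ᵥ (Bᴴ * B) *ᵥ y = ‖(WithLp.toLp 2 (B *ᵥ y) : EuclideanSpace ℝ κ)‖ ^ 2 := by
  rw [EuclideanSpace.real_norm_sq_eq, ← mulVec_mulVec, dotProduct_mulVec,
    conjTranspose_eq_transpose_of_trivial, vecMul_transpose]
  simp [dotProduct, sq]

lemma dotProduct_conjTranspose_mul_self_inv_mulVec [DecidableEq ι] (B : Matrix ι ι ℝ)
    (c : ι → ℝ) :
    c ⬝ᵥ (Bᴴ * B)⁻¹ *ᵥ c = ‖(WithLp.toLp 2 (c ᵥ* B⁻¹) : EuclideanSpace ℝ ι)‖ ^ 2 := by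
  rw [EuclideanSpace.real_norm_sq_eq, Matrix.mul_inv_rev, ← mulVec_mulVec, dotProduct_mulVec,
    conjTranspose_eq_transpose_of_trivial, ← transpose_nonsing_inv, mulVec_transpose]
  simp [dotProduct, sq]

variable (c xs : ι → ℝ) (d δ : ℝ) (M : Matrix ι ι ℝ)

def socfFeasibleRegion : Set (ι → ℝ) :=
  {x | √(δ ^ 2 + (x - xs) ⬝ᵥ M *ᵥ (x - xs)) ≤ c ⬝ᵥ x + d}

def socfRecessionCone : Set (ι → ℝ) := {w | √(w ⬝ᵥ M *ᵥ w) ≤ c ⬝ᵥ w}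

lemma isClosed_socfFeasibleRegion : IsClosed (socfFeasibleRegion c xs d δ M) :=
  isClosed_le (by fun_prop) (by fun_prop)

variable {c xs d δ M}

lemma socfFeasibleRegion_conjTranspose_mul_self (B : Matrix κ ι ℝ) :
    socfFeasibleRegion c xs d δ (Bᴴ * B) =
      {x | √(δ ^ 2 + ‖(WithLp.toLp 2 (B *ᵥ (x - xs)) : EuclideanSpace ℝ κ)‖ ^ 2) ≤
        c ⬝ᵥ x + d} := by
  simp only [socfFeasibleRegion, dotProduct_conjTranspose_mul_self_mulVec]

lemma convex_socfFeasibleRegion (hM : M.PosSemidef) :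
    Convex ℝ (socfFeasibleRegion c xs d δ M) := by
  obtain ⟨B, rfl⟩ := hM.exists_eq_conjTranspose_mul_self
  rw [socfFeasibleRegion_conjTranspose_mul_self]
  intro x hx y hy a b ha hb hab
  have hcomb : (WithLp.toLp 2 (B *ᵥ (a • x + b • y - xs)) : EuclideanSpace ℝ ι) =
      a • WithLp.toLp 2 (B *ᵥ (x - xs)) + b • WithLp.toLp 2 (B *ᵥ (y - xs)) := by
    rw [← WithLp.toLp_smul, ← WithLp.toLp_smul, ← WithLp.toLp_add, ← mulVec_smul, ← mulVec_smul,
      ← mulVec_add]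
    congr 2
    rw [smul_sub, smul_sub, sub_add_sub_comm, ← add_smul, hab, one_smul]
  calc _ = _ := congrArg (fun u => √(δ ^ 2 + ‖u‖ ^ 2)) hcomb
    _ ≤ _ := (convexOn_sqrt_sq_add_norm_sq δ).2 trivial trivial ha hb hab
    _ ≤ a • (c ⬝ᵥ x + d) + b • (c ⬝ᵥ y + d) := by gcongr <;> assumption
    _ = c ⬝ᵥ (a • x + b • y) + d := by
      simp only [dotProduct_add, dotProduct_smul, smul_eq_mul]
      linear_combination d * hab

lemma smul_mem_socfRecessionCone {w : ι → ℝ} (hw : w ∈ socfRecessionCone c M) {t : ℝ}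
    (ht : 0 ≤ t) :
    t • w ∈ socfRecessionCone c M := by
  have hq : (t • w) ⬝ᵥ M *ᵥ (t • w) = t ^ 2 * (w ⬝ᵥ M *ᵥ w) := by
    simp only [mulVec_smul, dotProduct_smul, smul_dotProduct, smul_eq_mul]; ring
  change √(_) ≤ _
  rw [hq, Real.sqrt_mul (sq_nonneg t), Real.sqrt_sq ht, dotProduct_smul, smul_eq_mul]
  exact mul_le_mul_of_nonneg_left hw ht

lemma add_mem_socfFeasibleRegion (hM : M.PosSemidef) {x w : ι → ℝ}
    (hx : x ∈ socfFeasibleRegion c xs d δ M) (hw : w ∈ socfRecessionCone c M) :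
    x + w ∈ socfFeasibleRegion c xs d δ M := by
  obtain ⟨B, rfl⟩ := hM.exists_eq_conjTranspose_mul_self
  rw [socfFeasibleRegion_conjTranspose_mul_self] at hx ⊢
  change √(_) ≤ _ at hw
  rw [dotProduct_conjTranspose_mul_self_mulVec, Real.sqrt_sq (norm_nonneg _)] at hw
  calc _ = √(δ ^ 2 + ‖(WithLp.toLp 2 (B *ᵥ (x - xs)) + WithLp.toLp 2 (B *ᵥ w) :
          EuclideanSpace ℝ ι)‖ ^ 2) := by
        rw [← WithLp.toLp_add, ← mulVec_add, add_sub_right_comm]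
    _ ≤ _ := sqrt_sq_add_norm_add_sq_le _ _ _
    _ ≤ c ⬝ᵥ x + d + c ⬝ᵥ w := add_le_add hx hw
    _ = c ⬝ᵥ (x + w) + d := by rw [dotProduct_add]; ring

lemma not_isBounded_socfFeasibleRegion (hM : M.PosSemidef)
    (hne : (socfFeasibleRegion c xs d δ M).Nonempty) {w : ι → ℝ}
    (hw : w ∈ socfRecessionCone c M) (hw0 : w ≠ 0) :
    ¬ IsBounded (socfFeasibleRegion c xs d δ M) :=
  let ⟨_, hx⟩ := hne
  not_isBounded_of_add_smul_mem (norm_ne_zero_iff.2 hw0) fun _ ht =>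
    add_mem_socfFeasibleRegion hM hx (smul_mem_socfRecessionCone hw ht)

lemma exists_ne_zero_mem_socfRecessionCone_of_not_posDef (hM : M.PosSemidef)
    (hM' : ¬ M.PosDef) :
    ∃ w ∈ socfRecessionCone c M, w ≠ 0 := by
  rw [posDef_iff_dotProduct_mulVec] at hM'
  push Not at hM'
  obtain ⟨v, hv0, hv⟩ := hM' hM.isHermitian
  have hq : v ⬝ᵥ M *ᵥ v = 0 := le_antisymm hv (hM.dotProduct_mulVec_nonneg v)
  rcases le_total 0 (c ⬝ᵥ v) with hcv | hcv
  · exact ⟨v, show √_ ≤ _ by rwa [hq, Real.sqrt_zero], hv0⟩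
  · exact ⟨-v, show √_ ≤ _ by simpa [mulVec_neg, hq] using hcv, neg_ne_zero.2 hv0⟩

lemma exists_ne_zero_mem_socfRecessionCone_of_one_le [DecidableEq ι] (hM : M.PosDef)
    (hc : 1 ≤ c ⬝ᵥ M⁻¹ *ᵥ c) : ∃ w ∈ socfRecessionCone c M, w ≠ 0 := by
  have hq : M⁻¹ *ᵥ c ⬝ᵥ M *ᵥ M⁻¹ *ᵥ c = c ⬝ᵥ M⁻¹ *ᵥ c := by
    rw [mulVec_mulVec, mul_nonsing_inv _ ((isUnit_iff_isUnit_det M).1 hM.isUnit), one_mulVec,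
      dotProduct_comm]
  refine ⟨M⁻¹ *ᵥ c, show √_ ≤ _ by rw [hq]; exact Real.sqrt_le_self_iff.2 (Or.inr hc),
    fun h0 => ?_⟩
  rw [h0, dotProduct_zero] at hc
  exact zero_lt_one.not_ge hc

lemma exists_ne_zero_mem_socfRecessionCone [DecidableEq ι] (hM : M.PosSemidef)
    (h : ¬ (M.PosDef ∧ c ⬝ᵥ M⁻¹ *ᵥ c < 1)) : ∃ w ∈ socfRecessionCone c M, w ≠ 0 := by
  by_cases hM' : M.PosDef
  · exact exists_ne_zero_mem_socfRecessionCone_of_one_le hM' (not_lt.1 fun hc => h ⟨hM', hc⟩)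
  · exact exists_ne_zero_mem_socfRecessionCone_of_not_posDef hM hM'

lemma isBounded_socfFeasibleRegion [DecidableEq ι] (hM : M.PosDef) (hc : c ⬝ᵥ M⁻¹ *ᵥ c < 1) :
    IsBounded (socfFeasibleRegion c xs d δ M) := by
  obtain ⟨B, rfl⟩ := hM.posSemidef.exists_eq_conjTranspose_mul_self
  have hB : IsUnit B.det := by
    have := (isUnit_iff_isUnit_det _).1 hM.isUnit
    rw [det_mul] at this
    exact isUnit_of_mul_isUnit_right this
  set a : EuclideanSpace ℝ ι := WithLp.toLp 2 (c ᵥ* B⁻¹)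
  have ha : ‖a‖ < 1 := by
    rw [dotProduct_conjTranspose_mul_self_inv_mulVec] at hc
    exact (sq_lt_one_iff₀ (norm_nonneg _)).1 hc
  have hinner (y : ι → ℝ) : inner ℝ a (WithLp.toLp 2 (B *ᵥ y)) = c ⬝ᵥ y := by
    rw [EuclideanSpace.inner_eq_star_dotProduct, star_trivial, dotProduct_comm,
      ← dotProduct_mulVec, mulVec_mulVec, nonsing_inv_mul _ hB, one_mulVec]
  refine ((isCompact_closedBall (0 : EuclideanSpace ℝ ι) ((c ⬝ᵥ xs + d) / (1 - ‖a‖))).image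
    (f := fun u => xs + B⁻¹ *ᵥ u.ofLp) (by fun_prop)).isBounded.subset fun x hx => ?_
  rw [socfFeasibleRegion_conjTranspose_mul_self] at hx
  refine ⟨WithLp.toLp 2 (B *ᵥ (x - xs)), ?_, by simp [mulVec_mulVec, nonsing_inv_mul _ hB]⟩
  rw [mem_closedBall_zero_iff]
  refine norm_le_div_of_sqrt_sq_add_norm_sq_le ha (hx.trans_eq ?_)
  rw [hinner, dotProduct_sub]
  ring

theorem socf_feasible_region_general {n : ℕ} (c xs : Fin n → ℝ) (d δ : ℝ)
    (M : Matrix (Fin n) (Fin n) ℝ) (hM : M.PosSemidef)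
    (f : (Fin n → ℝ) → ℝ)
    (hf : ∀ x, f x = c ⬝ᵥ x + d - Real.sqrt (δ ^ 2 + (x - xs) ⬝ᵥ M.mulVec (x - xs)))
    (R : Set (Fin n → ℝ)) (hR : R = {x | 0 ≤ f x}) (hne : R.Nonempty) :
    IsClosed R ∧ Convex ℝ R ∧
      (Bornology.IsBounded R ↔ M.PosDef ∧ c ⬝ᵥ M⁻¹.mulVec c < 1) := by
  obtain rfl : R = socfFeasibleRegion c xs d δ M := by
    ext x
    simp [hR, hf, socfFeasibleRegion]
  refine ⟨isClosed_socfFeasibleRegion c xs d δ M, convex_socfFeasibleRegion hM,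
    fun hb => ?_, fun ⟨hM', hc⟩ => isBounded_socfFeasibleRegion hM' hc⟩
  by_contra h
  obtain ⟨w, hw, hw0⟩ := exists_ne_zero_mem_socfRecessionCone hM h
  exact not_isBounded_socfFeasibleRegion hM hne hw hw0 hb

theorem socf_feasible_region {n : ℕ} (c xs : Fin n → ℝ) (d δ : ℝ)
    (M : Matrix (Fin n) (Fin n) ℝ) (hM : M.PosSemidef) (hδ : 0 ≤ δ)
    (f : (Fin n → ℝ) → ℝ)
    (hf : ∀ x, f x = c ⬝ᵥ x + d - Real.sqrt (δ ^ 2 + (x - xs) ⬝ᵥ M.mulVec (x - xs)))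
    (R : Set (Fin n → ℝ)) (hR : R = {x | 0 ≤ f x}) (hne : R.Nonempty) :
    IsClosed R ∧ Convex ℝ R ∧
      (Bornology.IsBounded R ↔ M.PosDef ∧ c ⬝ᵥ M⁻¹.mulVec c < 1) :=
  socf_feasible_region_general c xs d δ M hM f hf R hR hne
end
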